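/- arXiv:1911.06232 — 2 statements merged into one kernel-verified Lean document; each statement's English description precedes it below -/
import Mathlib

section
/- Consider the linear ODE ẏ = A_⊥(t) y on ℝⁿ, where A_⊥(t) = Ω(t) A(t) − (v(t) v(t)ᵀ / ‖v(t)‖²) A(t)ᵀ, with v(t) := x_s'(s(t)) the tangent of a regular C² solution curve of ẋ = f(x), Ω(t) = I − v(t) v(t)ᵀ/‖v(t)‖², and A(t) = Df(x_s(s(t))). Then, since v = c·f along the orbit, the function y_∥(t) := f(x_*(t))/‖f(x_*(t))‖² is a solution of ẏ = A_⊥(t) y. -/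
open Matrix

lemma vecMulVec_mulVec' {n : ℕ} (a b u : Fin n → ℝ) :
    vecMulVec a b *ᵥ u = (b ⬝ᵥ u) • a := by
  funext i
  simp only [mulVec, vecMulVec_apply, dotProduct, Pi.smul_apply, smul_eq_mul,
    Finset.sum_mul]
  exact Finset.sum_congr rfl fun j _ => by ring

lemma toMatrix'_mulVec' {n : ℕ} (L : (Fin n → ℝ) →ₗ[ℝ] (Fin n → ℝ)) (u : Fin n → ℝ) :
    LinearMap.toMatrix' L *ᵥ u = L u := by
  rw [← Matrix.toLin'_apply, Matrix.toLin'_toMatrix']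

/-- Along a solution `x_*` of `ẋ = f(x)` with nonvanishing velocity, the
function `y(t) = f(x_*(t))/‖f(x_*(t))‖²` solves the linear system
`ẏ = A_⊥(t) y`, where `A_⊥ = Ω A - (v vᵀ/‖v‖²) Aᵀ`, `v = f(x_*)`,
`Ω = I - v vᵀ/‖v‖²`, and `A = Df(x_*)`. -/
theorem nonvanishing_solution_transverse {n : ℕ}
    (f : (Fin n → ℝ) → (Fin n → ℝ)) (x : ℝ → (Fin n → ℝ))
    (hf : ContDiff ℝ 1 f)
    (hx : ∀ t : ℝ, HasDerivAt x (f (x t)) t)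
    (hnz : ∀ t : ℝ, f (x t) ≠ 0) :
    ∀ t : ℝ,
      HasDerivAt (fun τ : ℝ => (f (x τ) ⬝ᵥ f (x τ))⁻¹ • f (x τ))
        ((((1 : Matrix (Fin n) (Fin n) ℝ)
            - (f (x t) ⬝ᵥ f (x t))⁻¹ • vecMulVec (f (x t)) (f (x t)))
            * LinearMap.toMatrix' (fderiv ℝ f (x t) : (Fin n → ℝ) →ₗ[ℝ] (Fin n → ℝ))
          - (f (x t) ⬝ᵥ f (x t))⁻¹ • vecMulVec (f (x t)) (f (x t))
            * (LinearMap.toMatrix' (fderiv ℝ f (x t) : (Fin n → ℝ) →ₗ[ℝ] (Fin n → ℝ)))ᵀ)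
          *ᵥ ((f (x t) ⬝ᵥ f (x t))⁻¹ • f (x t))) t := by
  intro t
  set v : Fin n → ℝ := f (x t) with hv
  set A' : (Fin n → ℝ) →L[ℝ] (Fin n → ℝ) := fderiv ℝ f (x t) with hA'
  set w : Fin n → ℝ := A' v with hw
  -- derivative of f ∘ x
  have hdf : HasDerivAt (fun τ => f (x τ)) w t := by
    have h1 : HasFDerivAt f A' (x t) :=
      (hf.differentiable one_ne_zero).differentiableAt.hasFDerivAt
    exact h1.comp_hasDerivAt t (hx t)
  -- derivative of the dot product
  have hdot : HasDerivAt (fun τ => f (x τ) ⬝ᵥ f (x τ)) (w ⬝ᵥ v + v ⬝ᵥ w) t := by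
    have hcoord : ∀ i, HasDerivAt (fun τ => f (x τ) i) (w i) t := fun i =>
      (hasDerivAt_pi.1 hdf) i
    have : HasDerivAt (fun τ => ∑ i, f (x τ) i * f (x τ) i)
        (∑ i, (w i * v i + v i * w i)) t := by
      apply HasDerivAt.fun_sum
      intro i _
      exact (hcoord i).mul (hcoord i)
    simpa [dotProduct, Finset.sum_add_distrib] using this
  have hne : v ⬝ᵥ v ≠ 0 := by
    simpa [dotProduct_self_eq_zero] using hnz t
  have hinv : HasDerivAt (fun τ => (f (x τ) ⬝ᵥ f (x τ))⁻¹)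
      (-(w ⬝ᵥ v + v ⬝ᵥ w) / (v ⬝ᵥ v) ^ 2) t := hdot.inv hne
  have hmain := hinv.smul hdf
  convert hmain using 1
  case e'_4 => rfl
  case e'_5 => rfl
  case e'_6 => rfl
  case e'_8 => rfl
  set A : Matrix (Fin n) (Fin n) ℝ :=
    LinearMap.toMatrix' (A' : (Fin n → ℝ) →ₗ[ℝ] (Fin n → ℝ)) with hA
  have hAv : ∀ u : Fin n → ℝ, A *ᵥ u = A' u := fun u => by
    rw [hA, toMatrix'_mulVec']; rfl
  rw [sub_mulVec, ← mulVec_mulVec, ← mulVec_mulVec, sub_mulVec, one_mulVec,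
    mulVec_smul, hAv, smul_mulVec, vecMulVec_mulVec',
    mulVec_smul, smul_mulVec, vecMulVec_mulVec']
  have hATv : v ⬝ᵥ (Aᵀ *ᵥ v) = w ⬝ᵥ v := by
    rw [dotProduct_mulVec, vecMul_transpose, hAv, dotProduct_comm]
  rw [dotProduct_smul, dotProduct_smul, hATv]
  funext i
  simp only [Pi.add_apply, Pi.sub_apply, Pi.smul_apply, smul_eq_mul, ← hw]
  rw [dotProduct_comm w v]
  rw [← hv]
  field_simp
  ring
end

section
/- Let ζ : [0,∞) → ℝ be continuous, C > 0, α ≥ 0, and suppose ξ : [0,∞) → ℝ^k is continuous and satisfies ‖ξ(t)‖ ≤ C e^{∫₀ᵗ ζ} ‖ξ(0)‖ + C α ∫₀ᵗ e^{∫_τ^t ζ} ‖ξ(τ)‖ dτ for all t ≥ 0. Then ‖ξ(t)‖ ≤ C ‖ξ(0)‖ exp(∫₀ᵗ (ζ(σ) + C α) dσ) for all t ≥ 0. Consequently, if limsup_{t→∞} (1/t)∫₀ᵗ ζ = λ_M and λ_M + Cα < 0, then ξ(t) → 0 exponentially. -/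
/-!
Multiplying the hypothesis by `e^{-∫₀ᵗ ζ}` turns it into the integral inequality
`φ t ≤ C ‖ξ 0‖ + C α ∫₀ᵗ φ` for `φ t = e^{-∫₀ᵗ ζ} ‖ξ t‖`, since
`e^{-∫₀ᵗ ζ} e^{∫_τ^t ζ} = e^{-∫₀^τ ζ}`. Grönwall's lemma gives `φ t ≤ C ‖ξ 0‖ e^{C α t}`, which
is the first claim. For the second, `∫₀ᵗ (ζ + C α) < β t` eventually, with `β` the midpoint of
`λ_M + C α` and `0`, and on the remaining compact interval `‖ξ t‖ e^{-β t}` is bounded by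
continuity.
-/

open Filter Set Real intervalIntegral

theorem intervalIntegral.integral_add_const {f : ℝ → ℝ} {a b : ℝ}
    (hf : IntervalIntegrable f MeasureTheory.volume a b) (c : ℝ) :
    ∫ x in a..b, (f x + c) = (∫ x in a..b, f x) + c * (b - a) := by
  rw [integral_add hf intervalIntegrable_const, integral_const, smul_eq_mul, mul_comm]

theorem le_mul_exp_of_le_add_mul_integral {φ : ℝ → ℝ} {B K : ℝ} (hφ : Continuous φ)
    (hK : 0 ≤ K) (h : ∀ t, 0 ≤ t → φ t ≤ B + K * ∫ τ in (0 : ℝ)..t, φ τ) {t : ℝ}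
    (ht : 0 ≤ t) :
    φ t ≤ B * exp (K * t) := by
  set Ψ : ℝ → ℝ := fun u => B + K * ∫ τ in (0 : ℝ)..u, φ τ
  have hΨ : ∀ u, HasDerivAt Ψ (K * φ u) u := fun u =>
    ((hφ.integral_hasStrictDerivAt 0 u).hasDerivAt.const_mul K).const_add B
  have hweight : ∀ u, HasDerivAt (fun u => exp (-(K * u))) (exp (-(K * u)) * -K) u :=
    fun u => by simpa using ((hasDerivAt_id u).const_mul K).neg.exp
  -- `(e^{-K u} Ψ u)' = K e^{-K u} (φ u - Ψ u) ≤ 0`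
  have hanti : AntitoneOn (fun u => exp (-(K * u)) * Ψ u) (Ici 0) := by
    refine antitoneOn_of_hasDerivWithinAt_nonpos (convex_Ici 0)
      (fun u _ => ((hweight u).mul (hΨ u)).continuousAt.continuousWithinAt)
      (fun u _ => ((hweight u).mul (hΨ u)).hasDerivWithinAt) fun u hu => ?_
    rw [interior_Ici, mem_Ioi] at hu
    have hφΨ : φ u ≤ Ψ u := h u hu.le
    have := mul_nonneg (mul_nonneg (exp_pos (-(K * u))).le hK) (sub_nonneg.2 hφΨ)
    linarith
  calc φ t ≤ Ψ t := h t ht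
    _ = exp (K * t) * (exp (-(K * t)) * Ψ t) := by rw [← mul_assoc, ← exp_add]; simp
    _ ≤ exp (K * t) * (exp (-(K * 0)) * Ψ 0) :=
        mul_le_mul_of_nonneg_left (hanti self_mem_Ici ht ht) (exp_pos _).le
    _ = B * exp (K * t) := by simp [Ψ, mul_comm]

theorem exp_neg_integral_mul_integral_exp_integral_mul {ζ : ℝ → ℝ} (hζ : Continuous ζ)
    (f : ℝ → ℝ) (a t : ℝ) :
    exp (-∫ σ in a..t, ζ σ) * ∫ τ in a..t, exp (∫ σ in τ..t, ζ σ) * f τ =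
      ∫ τ in a..t, exp (-∫ σ in a..τ, ζ σ) * f τ := by
  rw [← integral_const_mul]
  refine integral_congr fun τ _ => ?_
  rw [← integral_interval_sub_left (hζ.intervalIntegrable a t) (hζ.intervalIntegrable a τ),
    ← mul_assoc, ← exp_add]
  ring_nf

theorem le_mul_exp_integral_add_of_le {ζ u : ℝ → ℝ} {A K : ℝ} (hζ : Continuous ζ)
    (hu : Continuous u) (hK : 0 ≤ K)
    (h : ∀ t, 0 ≤ t → u t ≤ A * exp (∫ σ in (0 : ℝ)..t, ζ σ) +
      K * ∫ τ in (0 : ℝ)..t, exp (∫ σ in τ..t, ζ σ) * u τ) {t : ℝ} (ht : 0 ≤ t) :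
    u t ≤ A * exp (∫ σ in (0 : ℝ)..t, (ζ σ + K)) := by
  set I : ℝ → ℝ := fun t => ∫ σ in (0 : ℝ)..t, ζ σ
  have hrescaled :
      ∀ s, 0 ≤ s → exp (-I s) * u s ≤ A + K * ∫ τ in (0 : ℝ)..s, exp (-I τ) * u τ := by
    intro s hs
    calc exp (-I s) * u s
        ≤ exp (-I s) *
            (A * exp (I s) + K * ∫ τ in (0 : ℝ)..s, exp (∫ σ in τ..s, ζ σ) * u τ) :=
          mul_le_mul_of_nonneg_left (h s hs) (exp_pos _).le
      _ = A * (exp (-I s) * exp (I s)) +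
            K * (exp (-I s) * ∫ τ in (0 : ℝ)..s, exp (∫ σ in τ..s, ζ σ) * u τ) := by ring
      _ = A + K * ∫ τ in (0 : ℝ)..s, exp (-I τ) * u τ := by
          rw [← exp_add, neg_add_cancel, exp_zero, mul_one,
            exp_neg_integral_mul_integral_exp_integral_mul hζ]
  have hgron := le_mul_exp_of_le_add_mul_integral (φ := fun s => exp (-I s) * u s)
    (by fun_prop) hK hrescaled ht
  calc u t = exp (I t) * (exp (-I t) * u t) := by rw [← mul_assoc, ← exp_add]; simp
    _ ≤ exp (I t) * (A * exp (K * t)) := mul_le_mul_of_nonneg_left hgron (exp_pos _).le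
    _ = A * exp (∫ σ in (0 : ℝ)..t, (ζ σ + K)) := by
        rw [integral_add_const (hζ.intervalIntegrable 0 t), sub_zero, exp_add]; ring

-- When `f` is unbounded above, `limsup f l` is the junk value `0`, hence the hypothesis `c ≤ 0`.
theorem Real.eventually_lt_of_limsup_lt_of_nonpos {ι : Type*} {l : Filter ι} {f : ι → ℝ}
    {c : ℝ} (h : limsup f l < c) (hc : c ≤ 0) : ∀ᶠ x in l, f x < c := by
  by_cases hf : l.IsBoundedUnder (· ≤ ·) f
  · exact eventually_lt_of_limsup_lt h hf
  · rw [Real.limsup_of_not_isBoundedUnder hf] at h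
    exact absurd hc (not_le.2 h)

theorem exists_pos_forall_le_mul_exp_of_eventually {u : ℝ → ℝ} (hu : Continuous u) {A β : ℝ}
    (h : ∀ᶠ t in atTop, u t ≤ A * exp (β * t)) :
    ∃ M > (0 : ℝ), ∀ t, 0 ≤ t → u t ≤ M * exp (β * t) := by
  obtain ⟨T, hT⟩ := h.exists_forall_of_atTop
  obtain ⟨M₀, hM₀⟩ := (isCompact_Icc (a := 0) (b := T)).bddAbove_image
    (hu.mul (continuous_exp.comp (continuous_const.mul continuous_id).neg)).continuousOn
  have hA : A ≤ max (max A M₀) 1 := (le_max_left _ _).trans (le_max_left _ _)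
  have hM₀' : M₀ ≤ max (max A M₀) 1 := (le_max_right _ _).trans (le_max_left _ _)
  refine ⟨max (max A M₀) 1, by positivity, fun t ht => ?_⟩
  rcases le_total t T with htT | hTt
  · calc u t = u t * exp (-(β * t)) * exp (β * t) := by rw [mul_assoc, ← exp_add]; simp
      _ ≤ M₀ * exp (β * t) := by gcongr; exact hM₀ ⟨t, ⟨ht, htT⟩, rfl⟩
      _ ≤ max (max A M₀) 1 * exp (β * t) := by gcongr
  · calc u t ≤ A * exp (β * t) := hT t hTt
      _ ≤ max (max A M₀) 1 * exp (β * t) := by gcongr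

/-- Key estimate: if `‖ξ(t)‖ ≤ C e^{∫₀ᵗ ζ}‖ξ(0)‖ + Cα ∫₀ᵗ e^{∫_τ^t ζ}‖ξ(τ)‖dτ`,
then `‖ξ(t)‖ ≤ C‖ξ(0)‖ exp(∫₀ᵗ (ζ + Cα))`; consequently if
`limsup (1/t)∫₀ᵗ ζ = λ_M` and `λ_M + Cα < 0` then `ξ → 0` exponentially. -/
theorem comparison_estimate {k : ℕ} (ζ : ℝ → ℝ) (C α lamM : ℝ)
    (ξ : ℝ → EuclideanSpace ℝ (Fin k))
    (hζ : Continuous ζ) (hC : 0 < C) (hα : 0 ≤ α) (hξ : Continuous ξ)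
    (hineq : ∀ t, 0 ≤ t →
      ‖ξ t‖ ≤ C * Real.exp (∫ σ in (0:ℝ)..t, ζ σ) * ‖ξ 0‖ +
        C * α * ∫ τ in (0:ℝ)..t, Real.exp (∫ σ in τ..t, ζ σ) * ‖ξ τ‖) :
    (∀ t, 0 ≤ t →
      ‖ξ t‖ ≤ C * ‖ξ 0‖ * Real.exp (∫ σ in (0:ℝ)..t, (ζ σ + C * α))) ∧
    (limsup (fun t => (1 / t) * ∫ σ in (0:ℝ)..t, ζ σ) atTop = lamM →
      lamM + C * α < 0 →
      ∃ M > (0:ℝ), ∃ β < (0:ℝ), ∀ t, 0 ≤ t → ‖ξ t‖ ≤ M * Real.exp (β * t)) := by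
  have hK : 0 ≤ C * α := mul_nonneg hC.le hα
  have hbound : ∀ t, 0 ≤ t → ‖ξ t‖ ≤ C * ‖ξ 0‖ * exp (∫ σ in (0 : ℝ)..t, (ζ σ + C * α)) :=
    fun t => le_mul_exp_integral_add_of_le hζ hξ.norm hK fun s hs => by
      simpa only [mul_right_comm C] using hineq s hs
  refine ⟨hbound, fun hlim hneg => ?_⟩
  set β := (lamM + C * α) / 2 with hβ
  have havg : ∀ᶠ t in atTop, (1 / t) * ∫ σ in (0 : ℝ)..t, ζ σ < β - C * α :=
    Real.eventually_lt_of_limsup_lt_of_nonpos (by rw [hlim]; linarith) (by linarith)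
  obtain ⟨M, hM, hMbound⟩ := exists_pos_forall_le_mul_exp_of_eventually hξ.norm
    (A := C * ‖ξ 0‖) (β := β) <| by
      filter_upwards [havg, eventually_gt_atTop 0] with t hlt ht
      rw [one_div, inv_mul_lt_iff₀ ht] at hlt
      refine (hbound t ht.le).trans ?_
      gcongr
      rw [integral_add_const (hζ.intervalIntegrable 0 t)]
      linarith
  exact ⟨M, hM, β, by linarith, hMbound⟩
end
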